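/- Let θ, ρ > 0 and let μ be the probability measure on ℕ obtained by drawing T from Exp(1) and then drawing N from the Poisson distribution with mean (θ/ρ)·(1−e^{−ρT}). Then the mean of μ equals θ/(1+ρ). (First claim of Proposition 5.6: in the infinitely many genes model, the number |𝒢_i∖𝒢_j| of genes present in individual i but absent in individual j has this mixed-Poisson law, where T ~ Exp(1) is the coalescence time of i and j; hence 𝔼[|𝒢_i∖𝒢_j|] = θ/(1+ρ), which is also the expectation of the average number of pairwise differences D in Theorem 2.) -/

import Mathlib

/-!
A Poisson variable with rate `r` has mean `r`, so by Tonelli the mixture has mean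
`𝔼[(θ/ρ)(1 - e^{-ρT})]`. The Laplace transform of `Exp(1)` at `ρ` is `1/(1+ρ)`, hence this is
`(θ/ρ) · ρ/(1+ρ) = θ/(1+ρ)`.
-/

open MeasureTheory ProbabilityTheory Real
open scoped ENNReal NNReal Nat

lemma hasSum_mul_natCast_poisson (r : ℝ≥0) :
    HasSum (fun n : ℕ ↦ exp (-r) * r ^ n / n ! * n) r := by
  have shift (n : ℕ) :
      exp (-r) * r ^ (n + 1) / (n + 1)! * (n + 1) = r * (exp (-r) * r ^ n / n !) := by
    rw [Nat.factorial_succ, Nat.cast_mul, pow_succ]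
    push_cast
    field_simp
  refine (hasSum_nat_add_iff' 1).mp ?_
  simpa [shift] using (hasSum_one_poissonMeasure r).mul_left (r : ℝ)

lemma lintegral_natCast_poissonMeasure (r : ℝ≥0) :
    ∫⁻ n, (n : ℝ≥0∞) ∂poissonMeasure r = r := by
  have h := hasSum_mul_natCast_poisson r
  rw [poissonMeasure, lintegral_sum_measure]
  simp only [lintegral_smul_measure, lintegral_dirac, smul_eq_mul]
  calc ∑' n : ℕ, ENNReal.ofReal (exp (-r) * r ^ n / n !) * n
      = ENNReal.ofReal (∑' n : ℕ, exp (-r) * r ^ n / n ! * n) := by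
        rw [ENNReal.ofReal_tsum_of_nonneg (fun n ↦ by positivity) h.summable]
        congr with n
        rw [ENNReal.ofReal_mul (by positivity), ENNReal.ofReal_natCast]
    _ = r := by rw [h.tsum_eq, ENNReal.ofReal_coe_nnreal]

lemma measurable_poissonMeasure : Measurable poissonMeasure := by
  refine Measure.measurable_of_measurable_coe _ fun s hs ↦ ?_
  simp only [poissonMeasure, Measure.sum_apply _ hs, Measure.smul_apply,
    Measure.dirac_apply' _ hs, smul_eq_mul]
  exact .tsum fun n ↦ by fun_prop

lemma integral_natCast_bind_poissonMeasure {α : Type*} [MeasurableSpace α] {ν : Measure α}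
    {f : α → ℝ} (hf : Integrable f ν) (hf_nonneg : 0 ≤ᵐ[ν] f) :
    ∫ n, (n : ℝ) ∂ν.bind (fun a ↦ poissonMeasure (f a).toNNReal) = ∫ a, f a ∂ν := by
  have hkernel : AEMeasurable (fun a ↦ poissonMeasure (f a).toNNReal) ν :=
    measurable_poissonMeasure.comp_aemeasurable hf.aemeasurable.real_toNNReal
  rw [integral_eq_lintegral_of_nonneg_ae (.of_forall fun n ↦ n.cast_nonneg)
      Measurable.of_discrete.aestronglyMeasurable,
    Measure.lintegral_bind hkernel Measurable.of_discrete.aemeasurable]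
  simp only [ENNReal.ofReal_natCast, lintegral_natCast_poissonMeasure]
  rw [← ENNReal.toReal_ofReal (integral_nonneg_of_ae hf_nonneg),
    ofReal_integral_eq_lintegral_ofReal hf hf_nonneg]
  rfl

lemma ae_nonneg_expMeasure (r : ℝ) : ∀ᵐ t ∂expMeasure r, 0 ≤ t := by
  rw [expMeasure, gammaMeasure,
    ae_withDensity_iff (f := gammaPDF 1 r) (measurable_gammaPDFReal 1 r).ennreal_ofReal]
  exact .of_forall fun t ht ↦ not_lt.mp fun hneg ↦ ht (gammaPDF_of_neg hneg)

lemma ae_exp_neg_mul_le_one_expMeasure (r : ℝ) {s : ℝ} (hs : 0 ≤ s) :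
    ∀ᵐ t ∂expMeasure r, exp (-s * t) ≤ 1 := by
  filter_upwards [ae_nonneg_expMeasure r] with t ht
  exact exp_le_one_iff.mpr (by nlinarith)

lemma integrable_exp_neg_mul_expMeasure {r s : ℝ} (hr : 0 < r) (hs : 0 ≤ s) :
    Integrable (fun t ↦ exp (-s * t)) (expMeasure r) := by
  have := isProbabilityMeasure_expMeasure hr
  refine .of_bound (by fun_prop) 1 ?_
  filter_upwards [ae_exp_neg_mul_le_one_expMeasure r hs] with t ht
  rwa [norm_of_nonneg (exp_pos _).le]

lemma integral_exp_neg_mul_expMeasure {r s : ℝ} (hr : 0 < r) (hrs : 0 < r + s) :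
    ∫ t, exp (-s * t) ∂expMeasure r = r / (r + s) := by
  have density (t : ℝ) : (exponentialPDF r t).toReal * exp (-s * t)
      = (Set.Ici 0).indicator (fun t ↦ r * exp (-(r + s) * t)) t := by
    rw [exponentialPDF_eq]
    by_cases ht : 0 ≤ t
    · rw [if_pos ht, Set.indicator_of_mem (Set.mem_Ici.mpr ht),
        ENNReal.toReal_ofReal (by positivity), mul_assoc, ← exp_add]
      ring_nf
    · simp [ht]
  have hpdf : Measurable (exponentialPDF r) := (measurable_exponentialPDFReal r).ennreal_ofReal
  rw [show expMeasure r = volume.withDensity (exponentialPDF r) from rfl,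
    integral_withDensity_eq_integral_toReal_smul hpdf (.of_forall fun _ ↦ ENNReal.ofReal_lt_top)]
  simp only [smul_eq_mul, density]
  rw [integral_indicator measurableSet_Ici, integral_Ici_eq_integral_Ioi, integral_const_mul,
    integral_exp_mul_Ioi (by linarith) 0, mul_zero, exp_zero]
  field_simp

lemma integral_one_sub_exp_neg_mul_expMeasure {r s : ℝ} (hr : 0 < r) (hs : 0 ≤ s) :
    ∫ t, (1 - exp (-s * t)) ∂expMeasure r = s / (r + s) := by
  have := isProbabilityMeasure_expMeasure hr
  rw [integral_sub (integrable_const 1) (integrable_exp_neg_mul_expMeasure hr hs),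
    integral_exp_neg_mul_expMeasure hr (by linarith), integral_const, probReal_univ, one_smul]
  field_simp
  ring

/-- First claim of Proposition 5.6: if `T ~ Exp(1)` and, given `T`,
`N ~ Poisson((θ/ρ)(1 - e^{-ρT}))`, then `𝔼[N] = θ/(1+ρ)`.  This is the expected
number of genes `|𝒢ᵢ ∖ 𝒢ⱼ|` present in individual `i` but absent in individual `j`
in the infinitely many genes model. -/
theorem mean_pairwise_difference (θ ρ : ℝ) (hθ : 0 < θ) (hρ : 0 < ρ)
    (μ : Measure ℕ)
    (hμ : μ = (expMeasure 1).bind (fun t =>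
      poissonMeasure ((θ / ρ * (1 - Real.exp (-ρ * t))).toNNReal))) :
    ∫ n : ℕ, (n : ℝ) ∂μ = θ / (1 + ρ) := by
  have := isProbabilityMeasure_expMeasure one_pos
  have hloss_nonneg : 0 ≤ᵐ[expMeasure 1] fun t ↦ θ / ρ * (1 - exp (-ρ * t)) := by
    filter_upwards [ae_exp_neg_mul_le_one_expMeasure 1 hρ.le] with t ht
    exact mul_nonneg (by positivity) (sub_nonneg.mpr ht)
  have hloss_int : Integrable (fun t ↦ θ / ρ * (1 - exp (-ρ * t))) (expMeasure 1) :=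
    ((integrable_const 1).sub (integrable_exp_neg_mul_expMeasure one_pos hρ.le)).const_mul _
  rw [hμ, integral_natCast_bind_poissonMeasure hloss_int hloss_nonneg, integral_const_mul,
    integral_one_sub_exp_neg_mul_expMeasure one_pos hρ.le]
  field_simp
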